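/- Let R₂(y₁, y₂; y₃) = (2y₃ - y₁ - y₂)/((y₂ - y₁)√((y₃ - y₁)(y₃ - y₂))) on {y₁ < y₂ < y₃}. Then R₂ satisfies the second-order PDE ((3/2)∂²_{y₁y₁} + (2/(y₂ - y₁))∂_{y₂} + (2/(y₃ - y₁))∂_{y₃} - 1/(y₂ - y₁)² - (1/8)·1/(y₃ - y₁)²) R₂ = 0 at every point of the simplex {y₁ < y₂ < y₃}. -/

import Mathlib

/-!
`R₂ = f / (a √(b c))` with `f, a, b, c` affine in the variables, so each partial derivative of
`R₂` is `R₂` times its logarithmic derivative `f'/f - a'/a - b'/(2b) - c'/(2c)`, a rational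
function `L`; likewise `∂²₁₁ R₂ = R₂ (L₁² + ∂₁ L₁)`. The operator applied to `R₂` is therefore
`R₂` times a rational function of `y₁, y₂, y₃`, which vanishes identically.
-/

open Real Set

/-- The Ising partition function `R₂(y₁,y₂;y₃)`. -/
noncomputable def R2 (y₁ y₂ y₃ : ℝ) : ℝ :=
  (2 * y₃ - y₁ - y₂) / ((y₂ - y₁) * Real.sqrt ((y₃ - y₁) * (y₃ - y₂)))

theorem HasDerivAt.div_mul_sqrt_mul {f a b c : ℝ → ℝ} {f' a' b' c' x : ℝ}
    (hf : HasDerivAt f f' x) (ha : HasDerivAt a a' x) (hb : HasDerivAt b b' x)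
    (hc : HasDerivAt c c' x) (hf0 : f x ≠ 0) (ha0 : a x ≠ 0) (hb0 : 0 < b x) (hc0 : 0 < c x) :
    HasDerivAt (fun y => f y / (a y * √(b y * c y)))
      (f x / (a x * √(b x * c x)) * (f' / f x - a' / a x - b' / (2 * b x) - c' / (2 * c x))) x := by
  have hbc : 0 < b x * c x := mul_pos hb0 hc0
  have hs : 0 < √(b x * c x) := sqrt_pos.2 hbc
  have hS : HasDerivAt (fun y => √(b y * c y)) ((b' * c x + b x * c') / (2 * √(b x * c x))) x :=
    (hb.mul hc).sqrt hbc.ne'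
  have hD : HasDerivAt (fun y => a y * √(b y * c y))
      (a' * √(b x * c x) + a x * ((b' * c x + b x * c') / (2 * √(b x * c x)))) x := ha.mul hS
  refine (hf.div hD (mul_ne_zero ha0 hs.ne')).congr_deriv ?_
  have hsq := sq_sqrt hbc.le
  field_simp
  rw [hsq]
  ring

section
variable {y₁ y₂ y₃ : ℝ}

theorem hasDerivAt_R2_fst (h12 : y₁ < y₂) (h23 : y₂ < y₃) :
    HasDerivAt (fun r => R2 r y₂ y₃)
      (R2 y₁ y₂ y₃ * ((y₂ - y₁)⁻¹ + (2 * (y₃ - y₁))⁻¹ - (2 * y₃ - y₁ - y₂)⁻¹)) y₁ := by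
  have h := ((hasDerivAt_id y₁).const_sub (2 * y₃)).sub_const y₂ |>.div_mul_sqrt_mul
    ((hasDerivAt_id y₁).const_sub y₂) ((hasDerivAt_id y₁).const_sub y₃)
    (hasDerivAt_const y₁ (y₃ - y₂)) (by simp; linarith) (by simp; linarith) (by simp; linarith)
    (by simp; linarith)
  refine h.congr_deriv ?_
  have : 2 * y₃ - y₁ - y₂ ≠ 0 := by linarith
  have : y₃ - y₁ ≠ 0 := by linarith
  have : y₂ - y₁ ≠ 0 := by linarith
  simp only [id, R2]
  congr 1
  field_simp
  ring

theorem hasDerivAt_R2_snd (h12 : y₁ < y₂) (h23 : y₂ < y₃) :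
    HasDerivAt (fun s => R2 y₁ s y₃)
      (R2 y₁ y₂ y₃ * ((2 * (y₃ - y₂))⁻¹ - (y₂ - y₁)⁻¹ - (2 * y₃ - y₁ - y₂)⁻¹)) y₂ := by
  have h := (hasDerivAt_id y₂).const_sub (2 * y₃ - y₁) |>.div_mul_sqrt_mul
    ((hasDerivAt_id y₂).sub_const y₁) (hasDerivAt_const y₂ (y₃ - y₁))
    ((hasDerivAt_id y₂).const_sub y₃) (by simp; linarith) (by simp; linarith) (by simp; linarith)
    (by simp; linarith)
  refine h.congr_deriv ?_
  have : 2 * y₃ - y₁ - y₂ ≠ 0 := by linarith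
  have : y₃ - y₂ ≠ 0 := by linarith
  have : y₂ - y₁ ≠ 0 := by linarith
  simp only [id, R2]
  congr 1
  field_simp
  ring

theorem hasDerivAt_R2_thd (h12 : y₁ < y₂) (h23 : y₂ < y₃) :
    HasDerivAt (fun t => R2 y₁ y₂ t)
      (R2 y₁ y₂ y₃ * (2 * (2 * y₃ - y₁ - y₂)⁻¹ - (2 * (y₃ - y₁))⁻¹ - (2 * (y₃ - y₂))⁻¹)) y₃ := by
  have h := ((hasDerivAt_id y₃).const_mul 2).sub_const y₁ |>.sub_const y₂ |>.div_mul_sqrt_mul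
    (hasDerivAt_const y₃ (y₂ - y₁)) ((hasDerivAt_id y₃).sub_const y₁)
    ((hasDerivAt_id y₃).sub_const y₂) (by simp; linarith) (by simp; linarith) (by simp; linarith)
    (by simp; linarith)
  refine h.congr_deriv ?_
  have : 2 * y₃ - y₁ - y₂ ≠ 0 := by linarith
  have : y₃ - y₁ ≠ 0 := by linarith
  have : y₃ - y₂ ≠ 0 := by linarith
  simp only [id, R2]
  congr 1
  field_simp
  ring

theorem hasDerivAt_deriv_R2_fst (h12 : y₁ < y₂) (h23 : y₂ < y₃) :
    HasDerivAt (deriv fun r => R2 r y₂ y₃)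
      (R2 y₁ y₂ y₃ * (((y₂ - y₁)⁻¹ + (2 * (y₃ - y₁))⁻¹ - (2 * y₃ - y₁ - y₂)⁻¹) ^ 2 +
        ((y₂ - y₁)⁻¹ ^ 2 + 2 * (2 * (y₃ - y₁))⁻¹ ^ 2 - (2 * y₃ - y₁ - y₂)⁻¹ ^ 2))) y₁ := by
  have hL : HasDerivAt (fun r => (y₂ - r)⁻¹ + (2 * (y₃ - r))⁻¹ - (2 * y₃ - r - y₂)⁻¹)
      ((y₂ - y₁)⁻¹ ^ 2 + 2 * (2 * (y₃ - y₁))⁻¹ ^ 2 - (2 * y₃ - y₁ - y₂)⁻¹ ^ 2) y₁ := by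
    have h := ((((hasDerivAt_id y₁).const_sub y₂).inv (by simp; linarith)).add
      ((((hasDerivAt_id y₁).const_sub y₃).const_mul 2).inv (by simp; linarith))).sub
      ((((hasDerivAt_id y₁).const_sub (2 * y₃)).sub_const y₂).inv (by simp; linarith))
    refine h.congr_deriv ?_
    simp only [id]
    field_simp
  have hderiv : deriv (fun r => R2 r y₂ y₃) =ᶠ[nhds y₁]
      fun r => R2 r y₂ y₃ * ((y₂ - r)⁻¹ + (2 * (y₃ - r))⁻¹ - (2 * y₃ - r - y₂)⁻¹) :=
    Filter.eventually_of_mem (Iio_mem_nhds h12) fun r hr => (hasDerivAt_R2_fst hr h23).deriv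
  refine ((hasDerivAt_R2_fst h12 h23).mul hL).congr_of_eventuallyEq hderiv |>.congr_deriv ?_
  ring

end

theorem stmt11 (y₁ y₂ y₃ : ℝ) (h12 : y₁ < y₂) (h23 : y₂ < y₃) :
    (3 / 2) * deriv (fun s => deriv (fun r => R2 r y₂ y₃) s) y₁ +
        (2 / (y₂ - y₁)) * deriv (fun s => R2 y₁ s y₃) y₂ +
        (2 / (y₃ - y₁)) * deriv (fun s => R2 y₁ y₂ s) y₃ -
        (1 / (y₂ - y₁) ^ 2) * R2 y₁ y₂ y₃ -
        (1 / 8) * (1 / (y₃ - y₁) ^ 2) * R2 y₁ y₂ y₃ = 0 := by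
  rw [(hasDerivAt_deriv_R2_fst h12 h23).deriv, (hasDerivAt_R2_snd h12 h23).deriv,
    (hasDerivAt_R2_thd h12 h23).deriv]
  have : 2 * y₃ - y₁ - y₂ ≠ 0 := by linarith
  have : y₃ - y₁ ≠ 0 := by linarith
  have : y₃ - y₂ ≠ 0 := by linarith
  have : y₂ - y₁ ≠ 0 := by linarith
  field_simp
  ring
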